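/- Let Ω be a vertex-weighted simple graph and p(Ω) its polarization. Then the matching number of Ω equals the matching number of p(Ω). -/

import Mathlib

open scoped Classical

/-- A matching of a vertex-weighted graph: a multiset of (ordered) edges in which
each vertex `v` appears at most `w v` times. -/
def IsWMatching {V : Type*} (G : SimpleGraph V) (w : V → ℕ) (M : Multiset (V × V)) : Prop :=
  (∀ e ∈ M, G.Adj e.1 e.2) ∧
  ∀ v : V, (M.map Prod.fst).count v + (M.map Prod.snd).count v ≤ w v

/-- The matching number of a vertex-weighted graph. -/
noncomputable def wNu {V : Type*} (G : SimpleGraph V) (w : V → ℕ) : ℕ :=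
  sSup {n | ∃ M : Multiset (V × V), IsWMatching G w M ∧ Multiset.card M = n}

/-- The weighted degree of a vertex: the sum of the weights of its neighbors. -/
noncomputable def wDeg {V : Type*} (G : SimpleGraph V) [Fintype V] (w : V → ℕ) (i : V) : ℕ :=
  ∑ j ∈ Finset.univ.filter (fun j => G.Adj i j), w j

/-- A weighted graph is `t`-saturating if `ν(Ω) < t` and
`ν(Ω − N(i)) ≥ t − deg(i)` for every vertex `i`. -/
def IsTSat {V : Type*} (G : SimpleGraph V) [Fintype V] (w : V → ℕ) (t : ℕ) : Prop :=
  wNu G w < t ∧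
  ∀ i : V, t - wDeg G w i ≤ wNu (G.induce {v | ¬ G.Adj i v}) (fun v => w v.1)

/-- The polarization of a weighted graph: each vertex `v` is replaced by `w v` copies. -/
def polarize {V : Type*} (G : SimpleGraph V) (w : V → ℕ) :
    SimpleGraph (Σ v : V, Fin (w v)) where
  Adj a b := G.Adj a.1 b.1
  symm := ⟨fun a b h => G.symm.symm a.1 b.1 h⟩
  loopless := ⟨fun a h => G.loopless.irrefl a.1 h⟩

lemma count_norm {α : Type*} {i : DecidableEq α} (x : α) (s : Multiset α) :
    @Multiset.count α i x s = @Multiset.count α (Classical.decEq α) x s := by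
  rw [Subsingleton.elim i (Classical.decEq α)]

lemma count_map_sigma_fst {V : Type*} {w : V → ℕ}
    (N : Multiset (Σ v : V, Fin (w v))) (v : V) :
    (N.map Sigma.fst).count v = ∑ t : Fin (w v), N.count ⟨v, t⟩ := by
  induction N using Multiset.induction_on with
  | empty => simp
  | cons x N ih =>
    obtain ⟨xv, xt⟩ := x
    simp only [Multiset.map_cons, Multiset.count_cons, ih, Finset.sum_add_distrib]
    congr 1
    by_cases h : v = xv
    · subst h
      simp [Sigma.mk.inj_iff]
    · rw [if_neg h, Finset.sum_eq_zero]
      intro t _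
      rw [if_neg]
      intro hx
      exact h (congrArg Sigma.fst hx)

lemma wmatching_of_polar {V : Type*} (G : SimpleGraph V) (w : V → ℕ)
    (N : Multiset ((Σ v : V, Fin (w v)) × (Σ v : V, Fin (w v))))
    (hN : IsWMatching (polarize G w) (fun _ => 1) N) :
    IsWMatching G w (N.map (Prod.map Sigma.fst Sigma.fst)) := by
  constructor
  · rintro e he
    obtain ⟨e', he', rfl⟩ := Multiset.mem_map.1 he
    exact hN.1 e' he'
  · intro v
    have h1 : (N.map (Prod.map Sigma.fst Sigma.fst)).map Prod.fst
        = (N.map Prod.fst).map Sigma.fst := by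
      rw [Multiset.map_map, Multiset.map_map]; rfl
    have h2 : (N.map (Prod.map Sigma.fst Sigma.fst)).map Prod.snd
        = (N.map Prod.snd).map Sigma.fst := by
      rw [Multiset.map_map, Multiset.map_map]; rfl
    rw [h1, h2, count_map_sigma_fst, count_map_sigma_fst, ← Finset.sum_add_distrib]
    calc (∑ t : Fin (w v), ((N.map Prod.fst).count ⟨v, t⟩ + (N.map Prod.snd).count ⟨v, t⟩))
        ≤ ∑ _t : Fin (w v), 1 := Finset.sum_le_sum fun t _ => by have := hN.2 ⟨v, t⟩; convert this using 3 <;> rfl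
      _ = w v := by simp

lemma polar_of_wmatching {V : Type*} (G : SimpleGraph V) :
    ∀ (M : Multiset (V × V)) (w : V → ℕ), IsWMatching G w M →
    ∃ N : Multiset ((Σ v : V, Fin (w v)) × (Σ v : V, Fin (w v))),
      IsWMatching (polarize G w) (fun _ => 1) N ∧ Multiset.card N = Multiset.card M := by
  intro M
  induction M using Multiset.induction_on with
  | empty => exact fun w _ => ⟨0, ⟨by simp, by simp⟩, by simp⟩
  | cons e M' ih =>
    obtain ⟨a, b⟩ := e
    intro w hM
    have hab : G.Adj a b := hM.1 (a, b) (Multiset.mem_cons_self _ _)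
    have hne : a ≠ b := hab.ne
    set w' : V → ℕ := fun v => (M'.map Prod.fst).count v + (M'.map Prod.snd).count v with hw'
    have hM' : IsWMatching G w' M' :=
      ⟨fun e he => hM.1 e (Multiset.mem_cons_of_mem he), fun v => le_refl _⟩
    have hcnt : ∀ v : V, (((a, b) ::ₘ M').map Prod.fst).count v
        + (((a, b) ::ₘ M').map Prod.snd).count v
        = w' v + (if v = a then 1 else 0) + (if v = b then 1 else 0) := by
      intro v
      simp only [Multiset.map_cons, Multiset.count_cons, hw']
      ring
    have hle : ∀ v, w' v ≤ w v := by
      intro v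
      have := hM.2 v
      rw [hcnt v] at this
      omega
    have ha : w' a < w a := by
      have := hM.2 a
      rw [hcnt a, if_pos rfl, if_neg hne] at this
      omega
    have hb : w' b < w b := by
      have := hM.2 b
      rw [hcnt b, if_neg (Ne.symm hne), if_pos rfl] at this
      omega
    obtain ⟨N', hN', hcard⟩ := ih w' hM'
    set f : (Σ v : V, Fin (w' v)) → (Σ v : V, Fin (w v)) :=
      fun x => ⟨x.1, Fin.castLE (hle x.1) x.2⟩ with hf
    have hf_inj : Function.Injective f := by
      rintro ⟨x1, x2⟩ ⟨y1, y2⟩ h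
      simp only [hf, Sigma.mk.inj_iff] at h
      obtain ⟨h1, h2⟩ := h
      subst h1
      simp only [heq_eq_eq, Fin.castLE_inj] at h2
      subst h2
      rfl
    set A : (Σ v : V, Fin (w v)) := ⟨a, ⟨w' a, ha⟩⟩ with hA
    set B : (Σ v : V, Fin (w v)) := ⟨b, ⟨w' b, hb⟩⟩ with hB
    have hAB : A ≠ B := by
      intro h
      exact hne (congrArg Sigma.fst h)
    have hfA : ∀ y, f y ≠ A := by
      intro y h
      have h1 : y.1 = a := congrArg Sigma.fst h
      have h2 : ((f y).2 : ℕ) < w' ((f y).1) := by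
        simp only [hf]
        exact y.2.isLt
      rw [h] at h2
      simp only [hA] at h2
      have : (A.2 : ℕ) = w' a := rfl
      omega
    have hfB : ∀ y, f y ≠ B := by
      intro y h
      have h2 : ((f y).2 : ℕ) < w' ((f y).1) := by
        simp only [hf]
        exact y.2.isLt
      rw [h] at h2
      simp only [hB] at h2
      have : (B.2 : ℕ) = w' b := rfl
      omega
    refine ⟨(A, B) ::ₘ N'.map (Prod.map f f), ⟨?_, ?_⟩, by simp [hcard]⟩
    · intro e he
      rcases Multiset.mem_cons.1 he with h | h
      · subst h
        exact hab
      · obtain ⟨e', he', rfl⟩ := Multiset.mem_map.1 h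
        exact hN'.1 e' he'
    · intro x
      have hm1 : (((A, B) ::ₘ N'.map (Prod.map f f)).map Prod.fst)
          = A ::ₘ (N'.map Prod.fst).map f := by
        rw [Multiset.map_cons, Multiset.map_map, Multiset.map_map]
        rfl
      have hm2 : (((A, B) ::ₘ N'.map (Prod.map f f)).map Prod.snd)
          = B ::ₘ (N'.map Prod.snd).map f := by
        rw [Multiset.map_cons, Multiset.map_map, Multiset.map_map]
        rfl
      rw [hm1, hm2]
      simp only [count_norm, Multiset.count_cons]
      by_cases hx : ∃ y, f y = x
      · obtain ⟨y, rfl⟩ := hx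
        rw [if_neg (hfA y), if_neg (hfB y)]
        have h1 : Multiset.count (f y) (Multiset.map f (Multiset.map Prod.fst N'))
            = Multiset.count y (Multiset.map Prod.fst N') :=
          Multiset.count_map_eq_count' f _ hf_inj y
        have h2 : Multiset.count (f y) (Multiset.map f (Multiset.map Prod.snd N'))
            = Multiset.count y (Multiset.map Prod.snd N') :=
          Multiset.count_map_eq_count' f _ hf_inj y
        have h3 := hN'.2 y
        simp only [count_norm] at h1 h2 h3 ⊢
        omega
      · have hc1 : Multiset.count x (Multiset.map f (Multiset.map Prod.fst N')) = 0 := by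
          rw [Multiset.count_eq_zero]
          intro h
          obtain ⟨y, _, hy⟩ := Multiset.mem_map.1 h
          exact hx ⟨y, hy⟩
        have hc2 : Multiset.count x (Multiset.map f (Multiset.map Prod.snd N')) = 0 := by
          rw [Multiset.count_eq_zero]
          intro h
          obtain ⟨y, _, hy⟩ := Multiset.mem_map.1 h
          exact hx ⟨y, hy⟩
        simp only [count_norm] at hc1 hc2 ⊢
        by_cases h : x = A
        · subst h
          rw [if_pos rfl, if_neg hAB]
          omega
        · rw [if_neg h]
          split <;> omega

/-- The matching number of a weighted graph equals the matching number of its polarization. -/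
theorem matchingNumber_polarize {V : Type*} (G : SimpleGraph V) (w : V → ℕ)
    (hw : ∀ v, 0 < w v) :
    wNu (polarize G w) (fun _ => 1) = wNu G w := by
  unfold wNu
  congr 1
  ext n
  constructor
  · rintro ⟨N, hN, rfl⟩
    exact ⟨N.map (Prod.map Sigma.fst Sigma.fst), wmatching_of_polar G w N hN,
      Multiset.card_map _ _⟩
  · rintro ⟨M, hM, rfl⟩
    obtain ⟨N, hN, hc⟩ := polar_of_wmatching G M w hM
    exact ⟨N, hN, hc⟩
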